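/- arXiv:0806.3144 — 6 statements merged into one kernel-verified Lean document; each statement's English description precedes it below -/
import Mathlib

section
/- Let α ≠ 0 be a real constant and t, t₁, t₂, t₃ : ℝ → ℝ be differentiable functions satisfying t_{k+1}'(x) = t_k'(x) + c₄(e^{α t_{k+1}(x)} − e^{α t_k(x)}) + c₅(e^{−α t_{k+1}(x)} − e^{−α t_k(x)}) for k = 0,1,2 (where t₀ = t). Assume the denominators never vanish. Then the cross-ratio F(x) = ((e^{α t(x)} − e^{α t₂(x)})(e^{α t₁(x)} − e^{α t₃(x)})) / ((e^{α t(x)} − e^{α t₃(x)})(e^{α t₁(x)} − e^{α t₂(x)})) is constant, i.e. F'(x) = 0 for all x. -/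
/-!
Put `u_k = exp (α t_k)`. The chain says that `t_k' - c₄ u_k - c₅ / u_k` does not depend on `k`;
calling this common value `p`, every `u_k` solves the same Riccati equation
`u' = α c₄ u² + α p u + α c₅`. For any Riccati equation `u' = a u² + b u + c`, two solutions satisfy
`(u_i - u_j)' = (u_i - u_j) (a (u_i + u_j) + b)`, so numerator and denominator of the cross-ratio
have the same logarithmic derivative `a (u₀ + u₁ + u₂ + u₃) + 2 b`, and their quotient is constant.
-/

open Real

def crossRatio {𝕜 : Type*} [Field 𝕜] (a b c d : 𝕜) : 𝕜 :=
  (a - c) * (b - d) / ((a - d) * (b - c))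

section Riccati

variable {𝕜 : Type*} [NontriviallyNormedField 𝕜] {f g : 𝕜 → 𝕜} {x k l : 𝕜}

theorem HasDerivAt.mul_of_logDeriv (hf : HasDerivAt f (f x * k) x)
    (hg : HasDerivAt g (g x * l) x) :
    HasDerivAt (fun y => f y * g y) (f x * g x * (k + l)) x :=
  (hf.mul hg).congr_deriv (by ring)

theorem HasDerivAt.div_of_logDeriv_eq (hf : HasDerivAt f (f x * k) x)
    (hg : HasDerivAt g (g x * k) x) (hgx : g x ≠ 0) :
    HasDerivAt (fun y => f y / g y) 0 x :=
  (hf.div hg hgx).congr_deriv (by field_simp; ring)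

theorem HasDerivAt.sub_of_riccati {a b c : 𝕜}
    (hf : HasDerivAt f (a * f x ^ 2 + b * f x + c) x)
    (hg : HasDerivAt g (a * g x ^ 2 + b * g x + c) x) :
    HasDerivAt (fun y => f y - g y) ((f x - g x) * (a * (f x + g x) + b)) x :=
  (hf.sub hg).congr_deriv (by ring)

theorem hasDerivAt_crossRatio_of_riccati {u₀ u₁ u₂ u₃ : 𝕜 → 𝕜} {a b c : 𝕜}
    (h₀ : HasDerivAt u₀ (a * u₀ x ^ 2 + b * u₀ x + c) x)
    (h₁ : HasDerivAt u₁ (a * u₁ x ^ 2 + b * u₁ x + c) x)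
    (h₂ : HasDerivAt u₂ (a * u₂ x ^ 2 + b * u₂ x + c) x)
    (h₃ : HasDerivAt u₃ (a * u₃ x ^ 2 + b * u₃ x + c) x)
    (hden : (u₀ x - u₃ x) * (u₁ x - u₂ x) ≠ 0) :
    HasDerivAt (fun y => crossRatio (u₀ y) (u₁ y) (u₂ y) (u₃ y)) 0 x := by
  have hnum := (h₀.sub_of_riccati h₂).mul_of_logDeriv (h₁.sub_of_riccati h₃)
  have hden' := (h₀.sub_of_riccati h₃).mul_of_logDeriv (h₁.sub_of_riccati h₂)
  rw [show a * (u₀ x + u₃ x) + b + (a * (u₁ x + u₂ x) + b)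
      = a * (u₀ x + u₂ x) + b + (a * (u₁ x + u₃ x) + b) by ring] at hden'
  exact hnum.div_of_logDeriv_eq hden' hden

end Riccati

theorem HasDerivAt.exp_mul_of_riccati {t : ℝ → ℝ} {x α p c₄ c₅ : ℝ}
    (ht : HasDerivAt t (p + c₄ * Real.exp (α * t x) + c₅ * Real.exp (-α * t x)) x) :
    HasDerivAt (fun y => Real.exp (α * t y))
      (α * c₄ * Real.exp (α * t x) ^ 2 + α * p * Real.exp (α * t x) + α * c₅) x :=
  ((ht.const_mul α).exp).congr_deriv (by rw [neg_mul, Real.exp_neg]; field_simp; ring)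

theorem stmt_0_general (α c₄ c₅ : ℝ)
    (t t₁ t₂ t₃ : ℝ → ℝ)
    (ht : Differentiable ℝ t) (ht₁ : Differentiable ℝ t₁)
    (ht₂ : Differentiable ℝ t₂) (ht₃ : Differentiable ℝ t₃)
    (h₁ : ∀ x, deriv t₁ x = deriv t x + c₄ * (exp (α * t₁ x) - exp (α * t x))
        + c₅ * (exp (-α * t₁ x) - exp (-α * t x)))
    (h₂ : ∀ x, deriv t₂ x = deriv t₁ x + c₄ * (exp (α * t₂ x) - exp (α * t₁ x))
        + c₅ * (exp (-α * t₂ x) - exp (-α * t₁ x)))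
    (h₃ : ∀ x, deriv t₃ x = deriv t₂ x + c₄ * (exp (α * t₃ x) - exp (α * t₂ x))
        + c₅ * (exp (-α * t₃ x) - exp (-α * t₂ x)))
    (hden : ∀ x, (exp (α * t x) - exp (α * t₃ x)) * (exp (α * t₁ x) - exp (α * t₂ x)) ≠ 0) :
    ∀ x, deriv (fun y =>
      ((exp (α * t y) - exp (α * t₂ y)) * (exp (α * t₁ y) - exp (α * t₃ y))) /
      ((exp (α * t y) - exp (α * t₃ y)) * (exp (α * t₁ y) - exp (α * t₂ y)))) x = 0 := by
  intro x
  set p := deriv t x - c₄ * exp (α * t x) - c₅ * exp (-α * t x)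
  have riccati {s : ℝ → ℝ} (hs : Differentiable ℝ s)
      (hs' : deriv s x = p + c₄ * exp (α * s x) + c₅ * exp (-α * s x)) :=
    HasDerivAt.exp_mul_of_riccati (hs' ▸ (hs x).hasDerivAt)
  exact (hasDerivAt_crossRatio_of_riccati (riccati ht (by ring))
    (riccati ht₁ (by linarith [h₁ x])) (riccati ht₂ (by linarith [h₁ x, h₂ x]))
    (riccati ht₃ (by linarith [h₁ x, h₂ x, h₃ x])) (hden x)).deriv

theorem stmt_0 (α c₄ c₅ : ℝ) (hα : α ≠ 0)
    (t t₁ t₂ t₃ : ℝ → ℝ)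
    (ht : Differentiable ℝ t) (ht₁ : Differentiable ℝ t₁)
    (ht₂ : Differentiable ℝ t₂) (ht₃ : Differentiable ℝ t₃)
    (h₁ : ∀ x, deriv t₁ x = deriv t x + c₄ * (exp (α * t₁ x) - exp (α * t x))
        + c₅ * (exp (-α * t₁ x) - exp (-α * t x)))
    (h₂ : ∀ x, deriv t₂ x = deriv t₁ x + c₄ * (exp (α * t₂ x) - exp (α * t₁ x))
        + c₅ * (exp (-α * t₂ x) - exp (-α * t₁ x)))
    (h₃ : ∀ x, deriv t₃ x = deriv t₂ x + c₄ * (exp (α * t₃ x) - exp (α * t₂ x))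
        + c₅ * (exp (-α * t₃ x) - exp (-α * t₂ x)))
    (hden : ∀ x, (exp (α * t x) - exp (α * t₃ x)) * (exp (α * t₁ x) - exp (α * t₂ x)) ≠ 0) :
    ∀ x, deriv (fun y =>
      ((exp (α * t y) - exp (α * t₂ y)) * (exp (α * t₁ y) - exp (α * t₃ y))) /
      ((exp (α * t y) - exp (α * t₃ y)) * (exp (α * t₁ y) - exp (α * t₂ y)))) x = 0 :=
  stmt_0_general α c₄ c₅ t t₁ t₂ t₃ ht ht₁ ht₂ ht₃ h₁ h₂ h₃ hden
end

section
/- Let A : ℝ → ℝ be continuous and nowhere zero, and let t, t₁ : ℝ → ℝ be differentiable with t₁'(x) = t'(x) + A(t(x) − t₁(x)) for all x. Let G be an antiderivative of 1/A. Then F(x) = x + G(t(x) − t₁(x)) satisfies F'(x) = 0 for all x. -/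
open Real

theorem hasDerivAt_id_add_comp_eq_zero {A G τ : ℝ → ℝ} {x : ℝ} (hA : A (τ x) ≠ 0)
    (hG : HasDerivAt G (1 / A (τ x)) (τ x)) (hτ : HasDerivAt τ (-A (τ x)) x) :
    HasDerivAt (fun y => y + G (τ y)) 0 x := by
  have h := (hasDerivAt_id x).add (hG.comp x hτ)
  rwa [show 1 + 1 / A (τ x) * -A (τ x) = 0 by field_simp; ring] at h

theorem stmt_1_general (A : ℝ → ℝ) (hA0 : ∀ u, A u ≠ 0)
    (t t₁ : ℝ → ℝ) (ht : Differentiable ℝ t) (ht₁ : Differentiable ℝ t₁)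
    (hchain : ∀ x, deriv t₁ x = deriv t x + A (t x - t₁ x))
    (G : ℝ → ℝ) (hG : ∀ u, HasDerivAt G (1 / A u) u) :
    ∀ x, deriv (fun y => y + G (t y - t₁ y)) x = 0 := by
  intro x
  have hτ := (ht x).hasDerivAt.sub (ht₁ x).hasDerivAt
  rw [hchain x, sub_add_cancel_left] at hτ
  exact (hasDerivAt_id_add_comp_eq_zero (hA0 _) (hG _) hτ).deriv

theorem stmt_1 (A : ℝ → ℝ) (hA : Continuous A) (hA0 : ∀ u, A u ≠ 0)
    (t t₁ : ℝ → ℝ) (ht : Differentiable ℝ t) (ht₁ : Differentiable ℝ t₁)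
    (hchain : ∀ x, deriv t₁ x = deriv t x + A (t x - t₁ x))
    (G : ℝ → ℝ) (hG : ∀ u, HasDerivAt G (1 / A u) u) :
    ∀ x, deriv (fun y => y + G (t y - t₁ y)) x = 0 :=
  stmt_1_general A hA0 t t₁ ht ht₁ hchain G hG
end

section
/- Let α ≠ 0 be a constant, A : ℝ → ℝ continuous and nowhere zero, and let t, t₁, t₂ : ℝ → ℝ be differentiable with t_{k+1}'(x) = t_k'(x) + A(t_k(x) − t_{k+1}(x)) e^{α t_k(x)} for k = 0, 1. Let G be an antiderivative of u ↦ e^{−α u}/A(u) and H an antiderivative of u ↦ 1/A(u). Then F(x) = G(t(x) − t₁(x)) − H(t₁(x) − t₂(x)) satisfies F'(x) = 0. -/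
open Real

/-! Differentiating a primitive of `g / A` at `u - v` along a link `v' = u' + A (u - v) w` of the
chain cancels the factor `A` and leaves `-g (u - v) w`. For `G (t - t₁)` this is
`-e^{-α (t - t₁)} e^{α t} = -e^{α t₁}`, and for `H (t₁ - t₂)` it is `-e^{α t₁}` as well. -/

theorem hasDerivAt_comp_sub_of_link {A g Φ u v : ℝ → ℝ} {x u' v' w : ℝ}
    (hΦ : HasDerivAt Φ (g (u x - v x) / A (u x - v x)) (u x - v x))
    (hA : A (u x - v x) ≠ 0) (hu : HasDerivAt u u' x) (hv : HasDerivAt v v' x)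
    (hlink : v' = u' + A (u x - v x) * w) :
    HasDerivAt (fun y => Φ (u y - v y)) (-(g (u x - v x) * w)) x := by
  have hτ : HasDerivAt (fun y => u y - v y) (u' - v') x := hu.sub hv
  refine (hΦ.comp x hτ).congr_deriv ?_
  rw [hlink]
  field_simp
  ring

theorem stmt_3_general (α : ℝ) (A : ℝ → ℝ) (hA0 : ∀ u, A u ≠ 0)
    (t t₁ t₂ : ℝ → ℝ)
    (ht : Differentiable ℝ t) (ht₁ : Differentiable ℝ t₁) (ht₂ : Differentiable ℝ t₂)
    (h₁ : ∀ x, deriv t₁ x = deriv t x + A (t x - t₁ x) * exp (α * t x))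
    (h₂ : ∀ x, deriv t₂ x = deriv t₁ x + A (t₁ x - t₂ x) * exp (α * t₁ x))
    (G H : ℝ → ℝ)
    (hG : ∀ u, HasDerivAt G (exp (-α * u) / A u) u)
    (hH : ∀ u, HasDerivAt H (1 / A u) u) :
    ∀ x, deriv (fun y => G (t y - t₁ y) - H (t₁ y - t₂ y)) x = 0 := by
  intro x
  have hGτ : HasDerivAt (fun y => G (t y - t₁ y))
      (-(exp (-α * (t x - t₁ x)) * exp (α * t x))) x :=
    hasDerivAt_comp_sub_of_link (g := fun s => exp (-α * s)) (hG _) (hA0 _)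
      (ht x).hasDerivAt (ht₁ x).hasDerivAt (h₁ x)
  have hHτ₁ : HasDerivAt (fun y => H (t₁ y - t₂ y)) (-(1 * exp (α * t₁ x))) x :=
    hasDerivAt_comp_sub_of_link (g := fun _ => 1) (hH _) (hA0 _)
      (ht₁ x).hasDerivAt (ht₂ x).hasDerivAt (h₂ x)
  have hF : HasDerivAt (fun y => G (t y - t₁ y) - H (t₁ y - t₂ y)) _ x := hGτ.sub hHτ₁
  rw [hF.deriv, ← exp_add]
  ring_nf

theorem stmt_3 (α : ℝ) (hα : α ≠ 0) (A : ℝ → ℝ) (hA : Continuous A) (hA0 : ∀ u, A u ≠ 0)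
    (t t₁ t₂ : ℝ → ℝ)
    (ht : Differentiable ℝ t) (ht₁ : Differentiable ℝ t₁) (ht₂ : Differentiable ℝ t₂)
    (h₁ : ∀ x, deriv t₁ x = deriv t x + A (t x - t₁ x) * exp (α * t x))
    (h₂ : ∀ x, deriv t₂ x = deriv t₁ x + A (t₁ x - t₂ x) * exp (α * t₁ x))
    (G H : ℝ → ℝ)
    (hG : ∀ u, HasDerivAt G (exp (-α * u) / A u) u)
    (hH : ∀ u, HasDerivAt H (1 / A u) u) :
    ∀ x, deriv (fun y => G (t y - t₁ y) - H (t₁ y - t₂ y)) x = 0 :=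
  stmt_3_general α A hA0 t t₁ t₂ ht ht₁ ht₂ h₁ h₂ G H hG hH
end

section
/- Let c₀ ≠ 0 be a constant and consider the chain t_{1x} = t_x + c₀(t − t₁)t (the case c₂ = c₃ = 0). Let t = t₀, t₁, t₂, t₃ : ℝ → ℝ be differentiable with t_{k+1}' = t_k' + c₀(t_k − t_{k+1}) t_k for k = 0, 1, 2, and suppose τ = t − t₁, τ₁ = t₁ − t₂, τ₂ = t₂ − t₃ (τ_j = t_j − t_{j+1}) are nowhere zero. Then the function F(x) = ln|τ₁(x)| − ln|τ₂(x)| + τ₁(x)/τ(x) is an x-integral, i.e. F'(x) = 0. -/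
open Real

theorem stmt_4 (c₀ : ℝ) (hc₀ : c₀ ≠ 0) (t t₁ t₂ t₃ : ℝ → ℝ)
    (ht : Differentiable ℝ t) (ht₁ : Differentiable ℝ t₁)
    (ht₂ : Differentiable ℝ t₂) (ht₃ : Differentiable ℝ t₃)
    (h₁ : ∀ x, deriv t₁ x = deriv t x + c₀ * (t x - t₁ x) * t x)
    (h₂ : ∀ x, deriv t₂ x = deriv t₁ x + c₀ * (t₁ x - t₂ x) * t₁ x)
    (h₃ : ∀ x, deriv t₃ x = deriv t₂ x + c₀ * (t₂ x - t₃ x) * t₂ x)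
    (hτ : ∀ x, t x - t₁ x ≠ 0) (hτ₁ : ∀ x, t₁ x - t₂ x ≠ 0) (hτ₂ : ∀ x, t₂ x - t₃ x ≠ 0) :
    ∀ x, deriv (fun y =>
      Real.log |t₁ y - t₂ y| - Real.log |t₂ y - t₃ y| + (t₁ y - t₂ y) / (t y - t₁ y)) x = 0 := by
  intro x
  have hd : ∀ y, (fun y => Real.log |t₁ y - t₂ y| - Real.log |t₂ y - t₃ y|
      + (t₁ y - t₂ y) / (t y - t₁ y)) y
      = Real.log (t₁ y - t₂ y) - Real.log (t₂ y - t₃ y)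
      + (t₁ y - t₂ y) / (t y - t₁ y) := fun y => by simp only [Real.log_abs]
  have hτd : HasDerivAt (fun y => t y - t₁ y) (-(c₀ * (t x - t₁ x) * t x)) x := by
    have := (ht x).hasDerivAt.sub (ht₁ x).hasDerivAt
    rw [h₁ x] at this; exact this.congr_deriv (by ring)
  have hτ₁d : HasDerivAt (fun y => t₁ y - t₂ y) (-(c₀ * (t₁ x - t₂ x) * t₁ x)) x := by
    have := (ht₁ x).hasDerivAt.sub (ht₂ x).hasDerivAt
    rw [h₂ x] at this; exact this.congr_deriv (by ring)
  have hτ₂d : HasDerivAt (fun y => t₂ y - t₃ y) (-(c₀ * (t₂ x - t₃ x) * t₂ x)) x := by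
    have := (ht₂ x).hasDerivAt.sub (ht₃ x).hasDerivAt
    rw [h₃ x] at this; exact this.congr_deriv (by ring)
  have hF : HasDerivAt (fun y => Real.log (t₁ y - t₂ y) - Real.log (t₂ y - t₃ y)
      + (t₁ y - t₂ y) / (t y - t₁ y))
      ((-(c₀ * (t₁ x - t₂ x) * t₁ x)) / (t₁ x - t₂ x)
        - (-(c₀ * (t₂ x - t₃ x) * t₂ x)) / (t₂ x - t₃ x)
        + ((-(c₀ * (t₁ x - t₂ x) * t₁ x)) * (t x - t₁ x)
            - (t₁ x - t₂ x) * (-(c₀ * (t x - t₁ x) * t x))) / (t x - t₁ x) ^ 2) x :=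
    ((hτ₁d.log (hτ₁ x)).sub (hτ₂d.log (hτ₂ x))).add (hτ₁d.div hτd (hτ x))
  rw [funext hd, hF.deriv]
  field_simp [hτ x, hτ₁ x, hτ₂ x]
  ring
end

section
/- Let c₀ ≠ 0 and consider the chain t_{1x} = t_x + c₀(t − t₁)t − c₀(t − t₁)², i.e. the case c₂ = −c₀, c₃ = 0. Given differentiable t, t₁, t₂, t₃ : ℝ → ℝ with t_{k+1}' = t_k' + c₀(t_k − t_{k+1})t_k − c₀(t_k − t_{k+1})² for k = 0,1,2, and with τ_j = t_j − t_{j+1} nowhere zero, the function F(x) = τ₁(x)/τ₂(x) − ln|τ(x)| + ln|τ₁(x)| satisfies F'(x) = 0. -/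
/-!
Each step of the chain gives `τₖ' = -c₀ τₖ tₖ₊₁`, so `(ln |τₖ|)' = -c₀ tₖ₊₁` and hence
`(ln |τ₁| - ln |τ|)' = -c₀ (t₂ - t₁) = c₀ τ₁`, while `(τ₁ / τ₂)' = -c₀ τ₁ (t₂ - t₃) / τ₂ = -c₀ τ₁`.
-/

open Real

section ChainStep

variable {f g h : ℝ → ℝ} {c x : ℝ}

theorem hasDerivAt_sub_of_chainStep (hf : DifferentiableAt ℝ f x) (hg : DifferentiableAt ℝ g x)
    (hfg : deriv g x = deriv f x + c * (f x - g x) * f x - c * (f x - g x) ^ 2) :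
    HasDerivAt (fun y => f y - g y) (-(c * (f x - g x) * g x)) x :=
  (hf.hasDerivAt.sub hg.hasDerivAt).congr_deriv (by rw [hfg]; ring)

theorem hasDerivAt_log_abs_sub_of_chainStep (hf : DifferentiableAt ℝ f x)
    (hg : DifferentiableAt ℝ g x)
    (hfg : deriv g x = deriv f x + c * (f x - g x) * f x - c * (f x - g x) ^ 2)
    (hne : f x - g x ≠ 0) :
    HasDerivAt (fun y => Real.log |f y - g y|) (-(c * g x)) x := by
  simp only [Real.log_abs]
  refine ((hasDerivAt_sub_of_chainStep hf hg hfg).log hne).congr_deriv ?_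
  field_simp

theorem hasDerivAt_div_of_chainStep (hf : DifferentiableAt ℝ f x) (hg : DifferentiableAt ℝ g x)
    (hh : DifferentiableAt ℝ h x)
    (hfg : deriv g x = deriv f x + c * (f x - g x) * f x - c * (f x - g x) ^ 2)
    (hgh : deriv h x = deriv g x + c * (g x - h x) * g x - c * (g x - h x) ^ 2)
    (hne : g x - h x ≠ 0) :
    HasDerivAt (fun y => (f y - g y) / (g y - h y)) (-(c * (f x - g x))) x := by
  refine ((hasDerivAt_sub_of_chainStep hf hg hfg).div
    (hasDerivAt_sub_of_chainStep hg hh hgh) hne).congr_deriv ?_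
  field_simp
  ring

end ChainStep

theorem stmt_5_general (c₀ : ℝ) (t t₁ t₂ t₃ : ℝ → ℝ)
    (ht : Differentiable ℝ t) (ht₁ : Differentiable ℝ t₁)
    (ht₂ : Differentiable ℝ t₂) (ht₃ : Differentiable ℝ t₃)
    (h₁ : ∀ x, deriv t₁ x = deriv t x + c₀ * (t x - t₁ x) * t x - c₀ * (t x - t₁ x) ^ 2)
    (h₂ : ∀ x, deriv t₂ x = deriv t₁ x + c₀ * (t₁ x - t₂ x) * t₁ x - c₀ * (t₁ x - t₂ x) ^ 2)
    (h₃ : ∀ x, deriv t₃ x = deriv t₂ x + c₀ * (t₂ x - t₃ x) * t₂ x - c₀ * (t₂ x - t₃ x) ^ 2)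
    (hτ : ∀ x, t x - t₁ x ≠ 0) (hτ₁ : ∀ x, t₁ x - t₂ x ≠ 0) (hτ₂ : ∀ x, t₂ x - t₃ x ≠ 0) :
    ∀ x, deriv (fun y =>
      (t₁ y - t₂ y) / (t₂ y - t₃ y) - Real.log |t y - t₁ y| + Real.log |t₁ y - t₂ y|) x = 0 := by
  intro x
  have hquot := hasDerivAt_div_of_chainStep (ht₁ x) (ht₂ x) (ht₃ x) (h₂ x) (h₃ x) (hτ₂ x)
  have hlog := hasDerivAt_log_abs_sub_of_chainStep (ht x) (ht₁ x) (h₁ x) (hτ x)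
  have hlog₁ := hasDerivAt_log_abs_sub_of_chainStep (ht₁ x) (ht₂ x) (h₂ x) (hτ₁ x)
  exact ((hquot.sub hlog).add hlog₁).deriv.trans (by ring)

theorem stmt_5 (c₀ : ℝ) (hc₀ : c₀ ≠ 0) (t t₁ t₂ t₃ : ℝ → ℝ)
    (ht : Differentiable ℝ t) (ht₁ : Differentiable ℝ t₁)
    (ht₂ : Differentiable ℝ t₂) (ht₃ : Differentiable ℝ t₃)
    (h₁ : ∀ x, deriv t₁ x = deriv t x + c₀ * (t x - t₁ x) * t x - c₀ * (t x - t₁ x) ^ 2)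
    (h₂ : ∀ x, deriv t₂ x = deriv t₁ x + c₀ * (t₁ x - t₂ x) * t₁ x - c₀ * (t₁ x - t₂ x) ^ 2)
    (h₃ : ∀ x, deriv t₃ x = deriv t₂ x + c₀ * (t₂ x - t₃ x) * t₂ x - c₀ * (t₂ x - t₃ x) ^ 2)
    (hτ : ∀ x, t x - t₁ x ≠ 0) (hτ₁ : ∀ x, t₁ x - t₂ x ≠ 0) (hτ₂ : ∀ x, t₂ x - t₃ x ≠ 0) :
    ∀ x, deriv (fun y =>
      (t₁ y - t₂ y) / (t₂ y - t₃ y) - Real.log |t y - t₁ y| + Real.log |t₁ y - t₂ y|) x = 0 :=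
  stmt_5_general c₀ t t₁ t₂ t₃ ht ht₁ ht₂ ht₃ h₁ h₂ h₃ hτ hτ₁ hτ₂
end

section
/- Let a : ℝ → ℝ be twice differentiable and suppose there exist functions μ : ℝ → ℝ and a constant c such that for all real t and t₁: a(t − t₁) + c(a(t − t₁)·t + b(t − t₁)) = μ(t₁) − μ(t), where b : ℝ → ℝ is twice differentiable. Then a''(τ) = 0 for all τ, i.e. a(τ) = c₀ τ + c₁ for some constants c₀, c₁. -/
/-!
Differentiating the identity `a (t - s) * (1 + c * t) + c * b (t - s) = μ s - μ t` in `s` removes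
the unknown `μ`; differentiating the result in `t` gives
`a'' τ * (1 + c * t) + c * (a' τ + b'' τ) = 0` for all `τ` and `t`. Comparing `t = 0` and `t = 1`
gives `c * a'' = 0`, and then `a'' ^ 2 = 0`.
-/

section Differentiation

variable {𝕜 : Type*} [NontriviallyNormedField 𝕜] {a b : 𝕜 → 𝕜} {c : 𝕜}

theorem HasDerivAt.eq_zero_of_forall_eq {f : 𝕜 → 𝕜} {f' x : 𝕜} (hf : HasDerivAt f f' x)
    (hconst : ∀ y, f y = f x) : f' = 0 :=
  hf.unique <| (hasDerivAt_const x (f x)).congr_of_eventuallyEq (.of_forall hconst)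

theorem deriv_comp_sub_mul_add_eq_of_eq_sub {μ : 𝕜 → 𝕜} (ha : Differentiable 𝕜 a)
    (hb : Differentiable 𝕜 b) (h : ∀ t s, a (t - s) * (1 + c * t) + c * b (t - s) = μ s - μ t)
    (t t' s : 𝕜) :
    deriv a (t - s) * (1 + c * t) + c * deriv b (t - s) =
      deriv a (t' - s) * (1 + c * t') + c * deriv b (t' - s) := by
  set g : 𝕜 → 𝕜 := fun s ↦
    (a (t - s) * (1 + c * t) + c * b (t - s)) - (a (t' - s) * (1 + c * t') + c * b (t' - s))
  have hg : HasDerivAt g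
      (-deriv a (t - s) * (1 + c * t) + c * -deriv b (t - s)
        - (-deriv a (t' - s) * (1 + c * t') + c * -deriv b (t' - s))) s :=
    ((((ha _).hasDerivAt.comp_const_sub t s).mul_const _).add
        (((hb _).hasDerivAt.comp_const_sub t s).const_mul c)).sub
      ((((ha _).hasDerivAt.comp_const_sub t' s).mul_const _).add
        (((hb _).hasDerivAt.comp_const_sub t' s).const_mul c))
  have hconst : ∀ s', g s' = g s := fun s' ↦ by simp only [g, h]; ring
  linear_combination -hg.eq_zero_of_forall_eq hconst

theorem deriv_mul_one_add_mul_add_eq_zero (ha : Differentiable 𝕜 a) (hb : Differentiable 𝕜 b)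
    (h : ∀ t t' s, a (t - s) * (1 + c * t) + c * b (t - s) =
      a (t' - s) * (1 + c * t') + c * b (t' - s))
    (τ t : 𝕜) : deriv a τ * (1 + c * t) + c * (a τ + deriv b τ) = 0 := by
  set s := t - τ
  set f : 𝕜 → 𝕜 := fun x ↦ a (x - s) * (1 + c * x) + c * b (x - s)
  have hf : HasDerivAt f
      (deriv a (t - s) * (1 + c * t) + a (t - s) * c + c * deriv b (t - s)) t :=
    (((ha _).hasDerivAt.comp_sub_const t s).mul
        (((hasDerivAt_id t).const_mul c).const_add 1 |>.congr_deriv (mul_one c))).add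
      (((hb _).hasDerivAt.comp_sub_const t s).const_mul c)
  have hτ : t - s = τ := sub_sub_cancel t τ
  rw [hτ] at hf
  linear_combination hf.eq_zero_of_forall_eq fun x ↦ h x t s

end Differentiation

theorem eq_zero_of_forall_mul_one_add_mul_add_eq_zero {R : Type*} [CommRing R] [NoZeroDivisors R]
    {x y c : R} (h : ∀ t, x * (1 + c * t) + c * y = 0) : x = 0 := by
  have hcx : x * c = 0 := by linear_combination h 1 - h 0
  exact pow_eq_zero_iff two_ne_zero |>.mp <| by linear_combination x * h 0 - y * hcx

theorem exists_eq_mul_add_of_deriv_deriv_eq_zero {𝕜 : Type*} [RCLike 𝕜] {a : 𝕜 → 𝕜}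
    (ha : Differentiable 𝕜 a) (ha' : Differentiable 𝕜 (deriv a))
    (h : ∀ x, deriv (deriv a) x = 0) : ∃ c₀ c₁ : 𝕜, ∀ x, a x = c₀ * x + c₁ := by
  have hderiv : ∀ x, deriv a x = deriv (fun x ↦ deriv a 0 * x) x := fun x ↦ by
    simp [is_const_of_deriv_eq_zero ha' h x 0]
  obtain ⟨c₁, hc₁⟩ := isOpen_univ.exists_eq_add_of_deriv_eq isPreconnected_univ
    ha.differentiableOn ((differentiable_id.const_mul _).differentiableOn) fun x _ ↦ hderiv x
  exact ⟨deriv a 0, c₁, fun x ↦ hc₁ (Set.mem_univ x)⟩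

theorem stmt_8 (a b μ : ℝ → ℝ) (c : ℝ)
    (ha : ContDiff ℝ 2 a) (hb : ContDiff ℝ 2 b)
    (h : ∀ t t₁ : ℝ, a (t - t₁) + c * (a (t - t₁) * t + b (t - t₁)) = μ t₁ - μ t) :
    (∀ τ, deriv (deriv a) τ = 0) ∧ ∃ c₀ c₁ : ℝ, ∀ τ, a τ = c₀ * τ + c₁ := by
  have h' : ∀ t s, a (t - s) * (1 + c * t) + c * b (t - s) = μ s - μ t := fun t s ↦ by
    rw [← h]; ring
  have hD := deriv_comp_sub_mul_add_eq_of_eq_sub (ha.differentiable two_ne_zero)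
    (hb.differentiable two_ne_zero) h'
  have ha'' : ∀ τ, deriv (deriv a) τ = 0 := fun τ ↦
    eq_zero_of_forall_mul_one_add_mul_add_eq_zero <|
      deriv_mul_one_add_mul_add_eq_zero ha.differentiable_deriv_two hb.differentiable_deriv_two
        hD τ
  exact ⟨ha'', exists_eq_mul_add_of_deriv_deriv_eq_zero (ha.differentiable two_ne_zero)
    ha.differentiable_deriv_two ha''⟩
end
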